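/- arXiv:2202.05746 — 2 statements merged into one kernel-verified Lean document; each statement's English description precedes it below -/
import Mathlib

section
/- Let Q be a finite type with a colouring c : Q → Bool, and let H₂ be the complex vector space of functions (Q → ZMod 2)² → ℂ. For every finset α ⊆ Q, the transversal CS gate satisfies the operator identity CS_Q ∘ X_α^{(1)} = X_α^{(1)} ∘ A_α^{(2)} ∘ CZ_α^{(1,2)} ∘ CS_Q as linear maps on H₂: commuting transversal CS through an X error on register 1 supported on α produces both an S/S† error A_α on register 2 and a CZ error between the two registers on α. -/
/-- Number of white elements of a finset. -/
def Nw {Q : Type*} (c : Q → Bool) (s : Finset Q) : ℕ :=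
  (s.filter (fun q => c q = true)).card

/-- Number of black elements of a finset. -/
def Nb {Q : Type*} (c : Q → Bool) (s : Finset Q) : ℕ :=
  (s.filter (fun q => c q = false)).card

/-- Indicator bit string of a finset. -/
def chi {Q : Type*} [DecidableEq Q] (s : Finset Q) : Q → ZMod 2 :=
  fun q => if q ∈ s then 1 else 0

/-- The two-register state space: complex functions on (Q → ZMod 2)². -/
abbrev H2 (Q : Type*) : Type _ := ((Q → ZMod 2) × (Q → ZMod 2)) → ℂ

/-- Pauli X on register 1 at the positions in α. -/
def X1 {Q : Type*} [DecidableEq Q] (α : Finset Q) (f : H2 Q) : H2 Q :=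
  fun v => f (v.1 + chi α, v.2)

/-- Pauli X on register 2 at the positions in α. -/
def X2 {Q : Type*} [DecidableEq Q] (α : Finset Q) (f : H2 Q) : H2 Q :=
  fun v => f (v.1, v.2 + chi α)

/-- Pauli Z on register 1 at the positions in α. -/
def Z1 {Q : Type*} (α : Finset Q) (f : H2 Q) : H2 Q :=
  fun v => (-1 : ℂ) ^ ((α.filter (fun q => v.1 q = 1)).card) * f v

/-- Pauli Z on register 2 at the positions in α. -/
def Z2 {Q : Type*} (α : Finset Q) (f : H2 Q) : H2 Q :=
  fun v => (-1 : ℂ) ^ ((α.filter (fun q => v.2 q = 1)).card) * f v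

/-- Controlled-Z between the two registers on the positions in α. -/
def CZ12 {Q : Type*} (α : Finset Q) (f : H2 Q) : H2 Q :=
  fun v => (-1 : ℂ) ^ ((α.filter (fun q => v.1 q = 1 ∧ v.2 q = 1)).card) * f v

/-- The S/S† error pattern on α acting on register 1. -/
def A1 {Q : Type*} (c : Q → Bool) (α : Finset Q) (f : H2 Q) : H2 Q :=
  fun v =>
    Complex.I ^ ((α.filter (fun q => v.1 q = 1 ∧ c q = true)).card) *
    (-Complex.I) ^ ((α.filter (fun q => v.1 q = 1 ∧ c q = false)).card) * f v

/-- The S/S† error pattern on α acting on register 2. -/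
def A2 {Q : Type*} (c : Q → Bool) (α : Finset Q) (f : H2 Q) : H2 Q :=
  fun v =>
    Complex.I ^ ((α.filter (fun q => v.2 q = 1 ∧ c q = true)).card) *
    (-Complex.I) ^ ((α.filter (fun q => v.2 q = 1 ∧ c q = false)).card) * f v

/-- The CS/CS† pattern on α: CS on white and CS† on black qubit pairs of α. -/
def CSop {Q : Type*} (c : Q → Bool) (α : Finset Q) (f : H2 Q) : H2 Q :=
  fun v =>
    Complex.I ^ ((α.filter (fun q => v.1 q = 1 ∧ v.2 q = 1 ∧ c q = true)).card) *
    (-Complex.I) ^ ((α.filter (fun q => v.1 q = 1 ∧ v.2 q = 1 ∧ c q = false)).card) * f v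


lemma pow_card_filter {Q : Type*} (z : ℂ) (s : Finset Q) (p : Q → Prop) [DecidablePred p] :
    z ^ (s.filter p).card = ∏ q ∈ s, if p q then z else 1 := by
  rw [Finset.prod_ite, Finset.prod_const, Finset.prod_const, one_pow, mul_one]

lemma filter_eq_univ_filter {Q : Type*} [DecidableEq Q] [Fintype Q] (α : Finset Q)
    (p : Q → Prop) [DecidablePred p] :
    α.filter p = Finset.univ.filter (fun q => q ∈ α ∧ p q) := by
  ext q; simp

theorem stmt_18 {Q : Type*} [DecidableEq Q] [Fintype Q] (c : Q → Bool)
    (α : Finset Q) :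
    CSop c (Finset.univ : Finset Q) ∘ X1 α =
      X1 α ∘ A2 c α ∘ CZ12 α ∘ CSop c (Finset.univ : Finset Q) := by
  funext f v
  simp only [Function.comp_apply, CSop, X1, A2, CZ12]
  have key :
      Complex.I ^ ((Finset.univ.filter (fun q => v.1 q = 1 ∧ v.2 q = 1 ∧ c q = true)).card) *
        (-Complex.I) ^ ((Finset.univ.filter (fun q => v.1 q = 1 ∧ v.2 q = 1 ∧ c q = false)).card)
      =
      Complex.I ^ ((α.filter (fun q => v.2 q = 1 ∧ c q = true)).card) *
        (-Complex.I) ^ ((α.filter (fun q => v.2 q = 1 ∧ c q = false)).card) *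
        ((-1 : ℂ) ^ ((α.filter (fun q => (v.1 + chi α) q = 1 ∧ v.2 q = 1)).card) *
          (Complex.I ^ ((Finset.univ.filter
              (fun q => (v.1 + chi α) q = 1 ∧ v.2 q = 1 ∧ c q = true)).card) *
            (-Complex.I) ^ ((Finset.univ.filter
              (fun q => (v.1 + chi α) q = 1 ∧ v.2 q = 1 ∧ c q = false)).card))) := by
    rw [filter_eq_univ_filter α (fun q => v.2 q = 1 ∧ c q = true),
        filter_eq_univ_filter α (fun q => v.2 q = 1 ∧ c q = false),
        filter_eq_univ_filter α (fun q => (v.1 + chi α) q = 1 ∧ v.2 q = 1)]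
    simp only [pow_card_filter]
    rw [← Finset.prod_mul_distrib, ← Finset.prod_mul_distrib, ← Finset.prod_mul_distrib,
        ← Finset.prod_mul_distrib, ← Finset.prod_mul_distrib]
    refine Finset.prod_congr rfl (fun q _ => ?_)
    have hv : (v.1 + chi α) q = v.1 q + (if q ∈ α then 1 else 0) := by
      simp [chi, Pi.add_apply]
    have hz : ∀ a : ZMod 2, a = 0 ∨ a = 1 := by decide
    have h20 : (2 : ZMod 2) = 0 := by decide
    have h1 := hz (v.1 q)
    have h2 := hz (v.2 q)
    by_cases hq : q ∈ α <;> rcases h1 with h1 | h1 <;> rcases h2 with h2 | h2 <;>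
      cases hc : c q <;>
      simp only [hv, hq, h1, h2, hc, h20, if_true, if_false, add_zero, one_add_one_eq_two] <;>
      norm_num [Complex.I_ne_zero]
  linear_combination f (v.1 + chi α, v.2) * key
end

section
/- Let Q be a finite type with a colouring c : Q → Bool, and let H₂ be the complex vector space of functions (Q → ZMod 2)² → ℂ. For all finsets α, γ ⊆ Q, the transversal CS gate satisfies the operator identity CS_Q ∘ X_α^{(1)} ∘ X_γ^{(2)} = (−1)^{N_b(α∩γ)} · I^{|α∩γ|} • (X_α^{(1)} ∘ X_γ^{(2)} ∘ Z_{α∩γ}^{(1)} ∘ Z_{α∩γ}^{(2)} ∘ A_α^{(2)} ∘ A_γ^{(1)} ∘ CZ_α^{(1,2)} ∘ CZ_γ^{(1,2)} ∘ CS_Q) as linear maps on H₂: commuting transversal CS through intersecting X error membranes α on register 1 and γ on register 2 produces Z linking-charge strings on the intersection α∩γ in both registers, one arising from the S part and one from the CZ part of the error. -/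
private lemma pw2' {Q : Type*} [Fintype Q] [DecidableEq Q] (s : Finset Q) (p : Q → Prop) [DecidablePred p]
    (z : ℂ) : z ^ (s.filter p).card = ∏ q, if q ∈ s ∧ p q then z else 1 := by
  rw [← Finset.prod_filter, Finset.prod_const]
  congr 1
  apply Finset.card_bij (fun a _ => a) <;> intros <;> simp_all

private lemma pw3' {Q : Type*} [Fintype Q] [DecidableEq Q] (s : Finset Q) (z : ℂ) :
    z ^ s.card = ∏ q, if q ∈ s then z else 1 := by
  rw [← Finset.prod_filter, Finset.prod_const, Finset.filter_univ_mem]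

set_option maxHeartbeats 2000000 in
theorem stmt_19 {Q : Type*} [DecidableEq Q] [Fintype Q] (c : Q → Bool)
    (α γ : Finset Q) :
    CSop c (Finset.univ : Finset Q) ∘ X1 α ∘ X2 γ =
      ((-1 : ℂ) ^ (Nb c (α ∩ γ)) * Complex.I ^ ((α ∩ γ).card)) •
        (X1 α ∘ X2 γ ∘ Z1 (α ∩ γ) ∘ Z2 (α ∩ γ) ∘ A2 c α ∘ A1 c γ ∘
          CZ12 α ∘ CZ12 γ ∘ CSop c (Finset.univ : Finset Q)) := by
  funext f v
  simp only [Function.comp_apply, Pi.smul_apply, smul_eq_mul, CSop, X1, X2, Z1, Z2, A1, A2,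
    CZ12, Nb]
  rw [pw3' (α ∩ γ) Complex.I]
  simp only [pw2', ← mul_assoc, ← Finset.prod_mul_distrib]
  congr 1
  refine Finset.prod_congr rfl fun q _ => ?_
  have z2 : ∀ x : ZMod 2, x = 0 ∨ x = 1 := by decide
  rcases z2 (v.1 q) with h1 | h1 <;> rcases z2 (v.2 q) with h2 | h2 <;>
    by_cases hα : q ∈ α <;> by_cases hγ : q ∈ γ <;> cases hc : c q <;>
    simp +decide [chi, h1, h2, hα, hγ, hc, Finset.mem_inter, Pi.add_apply]
end
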